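/- arXiv:2410.16921 — 2 statements merged into one kernel-verified Lean document; each statement's English description precedes it below -/
import Mathlib

section
/- Let D > 1, c ≥ 1 be coprime integers, χ a primitive Dirichlet character mod D, and ℓ, n positive integers with ℓ = ℓ₀ℓ' where ℓ₀ = gcd(ℓ, D^∞) (the largest divisor of ℓ composed of primes dividing D) and gcd(ℓ', D) = 1. Then S_χ(ℓ₀Dn, ℓ'; cD) = S(n, ℓ·D̄; c) · χ̄(c) · χ(ℓ') · ε_{χ̄} · √D, where D̄ is an inverse of D mod c, S(a,b;c) is the ordinary Kloosterman sum, and ε_χ = D^{-1/2} Σ_{α mod D} χ(α) e(α/D) is the normalized Gauss sum. -/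
/-!
Choose a Bézout relation `c u + D D̄ = 1`. By the Chinese remainder theorem
`(ℤ/cD)ˣ ≅ (ℤ/c)ˣ × (ℤ/D)ˣ`, and `e(z/cD) = e(D̄z/c) e(uz/D)`, so `S_χ(m, n; cD)` factors as a
Kloosterman sum mod `c` times a twisted sum mod `D`. For `m = ℓ₀Dn` the first argument vanishes
mod `D`, so the second factor is the Gauss sum of `χ̄` against `x ↦ e(uℓ'x/D)`; as `uℓ'` is a unit
mod `D` it equals `χ(uℓ') τ(χ̄) = χ̄(c) χ(ℓ') ε_χ̄ √D`. In the first factor `D̄D ≡ 1` removes the `D`,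
and since `ℓ₀` is a unit mod `c` (its primes divide `D`), the substitution `x ↦ ℓ₀x` moves `ℓ₀`
to the second argument, giving `S(n, ℓD̄; c)`.
-/

open Complex

/-- `e(t) = exp(2πit)`. -/
noncomputable def eC (t : ℝ) : ℂ := Complex.exp (2 * Real.pi * Complex.I * t)

/-- Twisted Kloosterman sum `S_χ(m,n;c)` for a Dirichlet character `χ` mod `D` (with `D ∣ c`). -/
noncomputable def twistedKloosterman (D c : ℕ) [NeZero c] (χ : DirichletCharacter ℂ D)
    (m n : ℤ) : ℂ :=
  ∑ x : (ZMod c)ˣ,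
    (starRingEnd ℂ) (χ (ZMod.cast (x : ZMod c))) *
      eC (((m * ((((x⁻¹ : (ZMod c)ˣ) : ZMod c)).val : ℤ) + n * (((x : ZMod c)).val : ℤ) : ℤ) : ℝ) / c)

/-- Ordinary Kloosterman sum `S(m,n;c)`. -/
noncomputable def kloosterman (c : ℕ) [NeZero c] (m n : ℤ) : ℂ :=
  ∑ x : (ZMod c)ˣ,
    eC (((m * ((((x⁻¹ : (ZMod c)ˣ) : ZMod c)).val : ℤ) + n * (((x : ZMod c)).val : ℤ) : ℤ) : ℝ) / c)

/-- Normalized Gauss sum `ε_χ = D^{-1/2} Σ_{α mod D} χ(α) e(α/D)`. -/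
noncomputable def gaussSumNorm (D : ℕ) [NeZero D] (χ : DirichletCharacter ℂ D) : ℂ :=
  (Real.sqrt D)⁻¹ * ∑ α : ZMod D, χ α * eC ((α.val : ℝ) / D)

/-- Normalized Gauss sum of the conjugate character, `ε_χ̄`. -/
noncomputable def gaussSumNormBar (D : ℕ) [NeZero D] (χ : DirichletCharacter ℂ D) : ℂ :=
  (Real.sqrt D)⁻¹ * ∑ α : ZMod D, (starRingEnd ℂ) (χ α) * eC ((α.val : ℝ) / D)

open ZMod (stdAddChar castHom)

lemma eC_intCast_div (N : ℕ) [NeZero N] (a : ℤ) :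
    eC ((a : ℝ) / N) = stdAddChar (a : ZMod N) := by
  rw [ZMod.stdAddChar_coe, eC]
  push_cast
  ring_nf

lemma eC_val_div (N : ℕ) [NeZero N] (x : ZMod N) : eC ((x.val : ℝ) / N) = stdAddChar x := by
  simpa using eC_intCast_div N x.val

lemma eC_kloosterman_summand (N : ℕ) [NeZero N] (m n : ℤ) (x : (ZMod N)ˣ) :
    eC (((m * ((x⁻¹ : (ZMod N)ˣ) : ZMod N).val + n * (x : ZMod N).val : ℤ) : ℝ) / N)
      = stdAddChar ((m : ZMod N) * ((x⁻¹ : (ZMod N)ˣ) : ZMod N)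
          + (n : ZMod N) * (x : ZMod N)) := by
  rw [eC_intCast_div]
  push_cast
  simp only [ZMod.natCast_val, ZMod.cast_id', id]

lemma kloosterman_eq_sum_stdAddChar (c : ℕ) [NeZero c] (m n : ℤ) :
    kloosterman c m n
      = ∑ x : (ZMod c)ˣ,
          stdAddChar ((m : ZMod c) * ((x⁻¹ : (ZMod c)ˣ) : ZMod c)
            + (n : ZMod c) * (x : ZMod c)) := by
  simp only [kloosterman, eC_kloosterman_summand]

lemma MulChar.starRingEnd_apply {R : Type*} [CommRing R] [Finite Rˣ] (χ : MulChar R ℂ) (a : R) :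
    starRingEnd ℂ (χ a) = χ⁻¹ a :=
  χ.star_apply' a

lemma twistedKloosterman_eq_sum_stdAddChar (D N : ℕ) [NeZero N] (χ : DirichletCharacter ℂ D)
    (m n : ℤ) :
    twistedKloosterman D N χ m n
      = ∑ x : (ZMod N)ˣ, χ⁻¹ (ZMod.cast (x : ZMod N))
          * stdAddChar ((m : ZMod N) * ((x⁻¹ : (ZMod N)ˣ) : ZMod N)
            + (n : ZMod N) * (x : ZMod N)) := by
  simp only [twistedKloosterman, eC_kloosterman_summand, MulChar.starRingEnd_apply]

lemma stdAddChar_mul_eq_mul {c D : ℕ} [NeZero c] [NeZero D] {u v : ℤ} (h : c * u + D * v = 1)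
    (z : ZMod (c * D)) :
    stdAddChar z = stdAddChar ((v : ZMod c) * castHom (dvd_mul_right c D) _ z)
      * stdAddChar ((u : ZMod D) * castHom (dvd_mul_left D c) _ z) := by
  obtain ⟨a, rfl⟩ := ZMod.intCast_surjective z
  simp only [map_intCast, ← Int.cast_mul, ZMod.stdAddChar_coe, ← Complex.exp_add]
  congr 1
  have h' : (c : ℂ) * u + D * v = 1 := by exact_mod_cast h
  have hc : (c : ℂ) ≠ 0 := NeZero.ne _
  have hD : (D : ℂ) ≠ 0 := NeZero.ne _
  push_cast
  field_simp
  linear_combination (-(a : ℂ)) * h'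

lemma ZMod.sum_units_mul_eq_sum_sum {M : Type*} [AddCommMonoid M] {c D : ℕ} [NeZero c]
    [NeZero D] (h : c.Coprime D) (F : (ZMod c)ˣ → (ZMod D)ˣ → M) :
    ∑ x : (ZMod (c * D))ˣ, F (Units.map (castHom (dvd_mul_right c D) (ZMod c)) x)
        (Units.map (castHom (dvd_mul_left D c) (ZMod D)) x)
      = ∑ u, ∑ w, F u w := by
  rw [← Fintype.sum_prod_type']
  refine Fintype.sum_equiv ((Units.mapEquiv (ZMod.chineseRemainder h).toMulEquiv).trans
    MulEquiv.prodUnits).toEquiv _ _ fun x => ?_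
  congr 1 <;> ext
  · exact DFunLike.congr_fun (RingHom.ext_zmod (castHom (dvd_mul_right c D) _)
      ((RingHom.fst _ _).comp (ZMod.chineseRemainder h).toRingHom)) (x : ZMod (c * D))
  · exact DFunLike.congr_fun (RingHom.ext_zmod (castHom (dvd_mul_left D c) _)
      ((RingHom.snd _ _).comp (ZMod.chineseRemainder h).toRingHom)) (x : ZMod (c * D))

theorem twistedKloosterman_mul_eq_mul {c D : ℕ} [NeZero c] [NeZero D] {u v : ℤ}
    (h : c * u + D * v = 1) (χ : DirichletCharacter ℂ D) (m n : ℤ) :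
    twistedKloosterman D (c * D) χ m n
      = (∑ x : (ZMod c)ˣ, stdAddChar ((v : ZMod c)
          * ((m : ZMod c) * ((x⁻¹ : (ZMod c)ˣ) : ZMod c) + (n : ZMod c) * (x : ZMod c))))
        * ∑ w : (ZMod D)ˣ, χ⁻¹ (w : ZMod D) * stdAddChar ((u : ZMod D)
          * ((m : ZMod D) * ((w⁻¹ : (ZMod D)ˣ) : ZMod D) + (n : ZMod D) * (w : ZMod D))) := by
  have hcop : c.Coprime D := Nat.isCoprime_iff_coprime.mp ⟨u, v, by linear_combination h⟩
  rw [twistedKloosterman_eq_sum_stdAddChar, Finset.sum_mul_sum,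
    ← ZMod.sum_units_mul_eq_sum_sum hcop]
  refine Finset.sum_congr rfl fun x _ => ?_
  rw [stdAddChar_mul_eq_mul h]
  simp only [map_add, map_mul, map_intCast, Units.coe_map, Units.coe_map_inv, MonoidHom.coe_coe,
    ZMod.castHom_apply]
  ring

lemma MulChar.sum_units_mul {R R' : Type*} [CommRing R] [Fintype R] [DecidableEq R]
    [CommRing R'] (χ : MulChar R R') (f : R → R') :
    ∑ u : Rˣ, χ u * f u = ∑ a, χ a * f a :=
  Fintype.sum_of_injective _ Units.val_injective _ _
    (fun a ha => by rw [χ.map_nonunit fun hu => ha ⟨hu.unit, rfl⟩, zero_mul]) fun _ => rfl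

lemma sum_units_inv_mul_stdAddChar_mul {D : ℕ} [NeZero D] (χ : DirichletCharacter ℂ D)
    {a : ZMod D} (ha : IsUnit a) :
    ∑ w : (ZMod D)ˣ, χ⁻¹ (w : ZMod D) * stdAddChar (a * (w : ZMod D))
      = χ a * gaussSum χ⁻¹ stdAddChar := by
  lift a to (ZMod D)ˣ using ha
  have key := gaussSum_mulShift_eq χ⁻¹ stdAddChar a
  rw [inv_inv] at key
  rw [← key, gaussSum, ← MulChar.sum_units_mul]
  rfl

lemma gaussSumNormBar_mul_sqrt (D : ℕ) [NeZero D] (χ : DirichletCharacter ℂ D) :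
    gaussSumNormBar D χ * Real.sqrt D = gaussSum χ⁻¹ stdAddChar := by
  have hD : (Real.sqrt D : ℂ) ≠ 0 := by simp [NeZero.ne D]
  rw [gaussSumNormBar, Complex.ofReal_inv, mul_right_comm, inv_mul_cancel₀ hD, one_mul, gaussSum]
  refine Finset.sum_congr rfl fun α _ => ?_
  rw [← eC_val_div, MulChar.starRingEnd_apply]

lemma sum_units_comp_mul_left {R M : Type*} [CommRing R] [Fintype Rˣ] [AddCommMonoid M]
    (f : R → M) {a : R} (ha : IsUnit a) (m n : R) :
    ∑ x : Rˣ, f (a * m * ((x⁻¹ : Rˣ) : R) + n * x)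
      = ∑ x : Rˣ, f (m * ((x⁻¹ : Rˣ) : R) + a * n * x) := by
  lift a to Rˣ using ha
  refine (Fintype.sum_equiv (Equiv.mulLeft a) _ _ fun y => congrArg f ?_).symm
  simp only [Equiv.coe_mulLeft, mul_inv_rev, Units.val_mul]
  linear_combination (-(m * ((y⁻¹ : Rˣ) : R))) * a.mul_inv

lemma sum_stdAddChar_eq_kloosterman {c : ℕ} [NeZero c] {D ℓ₀ ℓ' n : ℕ} {Dbar : ℤ}
    (hDDbar : (D : ZMod c) * Dbar = 1) (hℓ₀ : IsUnit (ℓ₀ : ZMod c)) :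
    ∑ x : (ZMod c)ˣ, stdAddChar ((Dbar : ZMod c) * ((((ℓ₀ : ℤ) * D * n : ℤ) : ZMod c)
        * ((x⁻¹ : (ZMod c)ˣ) : ZMod c) + ((ℓ' : ℤ) : ZMod c) * (x : ZMod c)))
      = kloosterman c n ((ℓ₀ * ℓ' : ℕ) * Dbar) := by
  calc _ = ∑ x : (ZMod c)ˣ, stdAddChar ((ℓ₀ : ZMod c) * (n : ZMod c)
          * ((x⁻¹ : (ZMod c)ˣ) : ZMod c) + (ℓ' * Dbar : ZMod c) * (x : ZMod c)) :=
        Fintype.sum_congr _ _ fun x => congrArg _ <| by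
          push_cast
          linear_combination
            ((ℓ₀ : ZMod c) * (n : ZMod c) * ((x⁻¹ : (ZMod c)ˣ) : ZMod c)) * hDDbar
    _ = ∑ x : (ZMod c)ˣ, stdAddChar ((n : ZMod c) * ((x⁻¹ : (ZMod c)ˣ) : ZMod c)
          + (ℓ₀ : ZMod c) * (ℓ' * Dbar : ZMod c) * (x : ZMod c)) :=
        sum_units_comp_mul_left _ hℓ₀ _ _
    _ = kloosterman c n ((ℓ₀ * ℓ' : ℕ) * Dbar) := by
        rw [kloosterman_eq_sum_stdAddChar]
        push_cast
        ring_nf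

lemma sum_inv_mul_stdAddChar_eq_gaussSum {D : ℕ} [NeZero D] (χ : DirichletCharacter ℂ D)
    {u : ℤ} {ℓ₀ ℓ' n : ℕ} (hu : IsUnit ((u : ZMod D) * ℓ')) :
    ∑ w : (ZMod D)ˣ, χ⁻¹ (w : ZMod D) * stdAddChar ((u : ZMod D)
        * ((((ℓ₀ : ℤ) * D * n : ℤ) : ZMod D) * ((w⁻¹ : (ZMod D)ˣ) : ZMod D)
          + ((ℓ' : ℤ) : ZMod D) * (w : ZMod D)))
      = χ (u * ℓ') * gaussSum χ⁻¹ stdAddChar := by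
  rw [← sum_units_inv_mul_stdAddChar_mul χ hu]
  refine Fintype.sum_congr _ _ fun w => ?_
  push_cast
  rw [ZMod.natCast_self]
  ring_nf

theorem twistedKloosterman_mul_level_general (D c : ℕ) [NeZero D] [NeZero c]
    (χ : DirichletCharacter ℂ D) (ℓ ℓ₀ ℓ' n : ℕ)
    (hfac : ℓ = ℓ₀ * ℓ')
    (hℓ₀ : ∀ p : ℕ, p.Prime → p ∣ ℓ₀ → p ∣ D) (hℓ' : Nat.Coprime ℓ' D)
    (Dbar : ℤ) (hDbar : (D : ℤ) * Dbar ≡ 1 [ZMOD (c : ℤ)]) :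
    twistedKloosterman D (c * D) χ ((ℓ₀ : ℤ) * D * n) (ℓ' : ℤ)
      = kloosterman c (n : ℤ) ((ℓ : ℤ) * Dbar) * (starRingEnd ℂ) (χ (c : ZMod D))
          * χ ((ℓ' : ℕ) : ZMod D) * gaussSumNormBar D χ * (Real.sqrt D : ℂ) := by
  obtain ⟨u, hu⟩ : ∃ u : ℤ, c * u + D * Dbar = 1 := by
    obtain ⟨u, hu⟩ := hDbar.dvd
    exact ⟨u, by linear_combination -hu⟩
  have hcop : c.Coprime D := Nat.isCoprime_iff_coprime.mp ⟨u, Dbar, by linear_combination hu⟩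
  have hDDbar : (D : ZMod c) * Dbar = 1 := by simpa using congrArg (Int.cast : ℤ → ZMod c) hu
  have hcu : (c : ZMod D) * u = 1 := by simpa using congrArg (Int.cast : ℤ → ZMod D) hu
  have hℓ₀c : IsUnit (ℓ₀ : ZMod c) := (ZMod.isUnit_iff_coprime ℓ₀ c).mpr <|
    Nat.coprime_of_dvd fun p hp hpℓ₀ hpc =>
      hp.ne_one ((hcop.coprime_dvd_left hpc).eq_one_of_dvd (hℓ₀ p hp hpℓ₀))
  have huℓ' : IsUnit ((u : ZMod D) * ℓ') :=
    (IsUnit.of_mul_eq_one_right _ hcu).mul ((ZMod.isUnit_iff_coprime ℓ' D).mpr hℓ')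
  have hχc : (starRingEnd ℂ) (χ c) = χ u := by
    rw [MulChar.starRingEnd_apply, MulChar.inv_apply_eq_inv']
    exact inv_eq_of_mul_eq_one_right (by rw [← map_mul, hcu, map_one])
  rw [twistedKloosterman_mul_eq_mul hu, sum_stdAddChar_eq_kloosterman hDDbar hℓ₀c,
    sum_inv_mul_stdAddChar_eq_gaussSum χ huℓ', map_mul, hχc, ← gaussSumNormBar_mul_sqrt, hfac]
  ring

/-- Twisted multiplicativity: for primitive `χ` mod `D`, `(c,D)=1`, and `ℓ = ℓ₀ℓ'` with
`ℓ₀ = gcd(ℓ, D^∞)` and `(ℓ',D)=1`, one has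
`S_χ(ℓ₀Dn, ℓ'; cD) = S(n, ℓD̄; c) · χ̄(c) · χ(ℓ') · ε_χ̄ · √D`. -/
theorem twistedKloosterman_mul_level (D c : ℕ) [NeZero D] [NeZero c] (hD : 1 < D)
    (hc : 1 ≤ c) (hcop : Nat.Coprime c D) (χ : DirichletCharacter ℂ D)
    (hχ : χ.IsPrimitive) (ℓ ℓ₀ ℓ' n : ℕ) (hℓpos : 1 ≤ ℓ) (hn : 1 ≤ n)
    (hfac : ℓ = ℓ₀ * ℓ')
    (hℓ₀ : ∀ p : ℕ, p.Prime → p ∣ ℓ₀ → p ∣ D) (hℓ' : Nat.Coprime ℓ' D)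
    (Dbar : ℤ) (hDbar : (D : ℤ) * Dbar ≡ 1 [ZMOD (c : ℤ)]) :
    twistedKloosterman D (c * D) χ ((ℓ₀ : ℤ) * D * n) (ℓ' : ℤ)
      = kloosterman c (n : ℤ) ((ℓ : ℤ) * Dbar) * (starRingEnd ℂ) (χ (c : ZMod D))
          * χ ((ℓ' : ℕ) : ZMod D) * gaussSumNormBar D χ * (Real.sqrt D : ℂ) :=
  twistedKloosterman_mul_level_general D c χ ℓ ℓ₀ ℓ' n hfac hℓ₀ hℓ' Dbar hDbar
end

section
/- Let D > 1 be square-free, c ≥ 1 with gcd(c, D) = 1, and ℓ, n positive integers with ℓ = ℓ₀ℓ' where ℓ₀ = gcd(ℓ, D^∞) and gcd(ℓ', D) = 1. Then for the ordinary (untwisted) Kloosterman sums, S(ℓ₀Dn, ℓ'; cD) = S(n, ℓ·D̄; c) · μ(D), where D̄ is an inverse of D mod c and μ is the Möbius function. Equivalently, S(n, ℓ·D̄; c) = μ(D) · S(ℓ₀Dn, ℓ'; cD). -/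
open Complex

/-!
Kloosterman sums are twisted-multiplicative: by the Chinese remainder theorem,
`S(m, n; cD) = S(D̄m, D̄n; c) · S(c̄m, c̄n; D)`. For `m = ℓ₀Dn`, `n = ℓ'` the factor mod `c` is
`S(ℓ₀n, D̄ℓ'; c)`, which the substitution `x ↦ ℓ₀x` (`ℓ₀` is prime to `c`) turns into
`S(n, ℓD̄; c)`. The factor mod `D` is `S(0, c̄ℓ'; D)`, the Ramanujan sum `c_D(1)` since `c̄ℓ'` is a
unit mod `D`; it is multiplicative with `c_p(1) = -1`, so equals `μ(D)` for square-free `D`.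
As `μ(D)² = 1`, the two forms of the identity are equivalent.
-/

noncomputable def kloostermanZMod (c : ℕ) [NeZero c] (m n : ZMod c) : ℂ :=
  ∑ x : (ZMod c)ˣ, ZMod.stdAddChar (m * ((x⁻¹ : (ZMod c)ˣ) : ZMod c) + n * (x : ZMod c))

noncomputable def ramanujanSum (q : ℕ) [NeZero q] (n : ZMod q) : ℂ :=
  ∑ x : (ZMod q)ˣ, ZMod.stdAddChar (n * (x : ZMod q))

section

variable {c : ℕ} [NeZero c]

lemma eC_intCast_div_s4 (k : ℤ) : eC ((k : ℝ) / c) = ZMod.stdAddChar (k : ZMod c) := by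
  rw [ZMod.stdAddChar_coe, eC]
  push_cast
  ring_nf

lemma kloosterman_eq_kloostermanZMod (m n : ℤ) :
    kloosterman c m n = kloostermanZMod c m n := by
  refine Fintype.sum_congr _ _ fun x => ?_
  rw [eC_intCast_div_s4]
  push_cast [ZMod.natCast_zmod_val]
  rfl

lemma kloostermanZMod_mul_left_of_isUnit {a : ZMod c} (ha : IsUnit a) (m n : ZMod c) :
    kloostermanZMod c (a * m) n = kloostermanZMod c m (a * n) := by
  obtain ⟨a, rfl⟩ := ha
  rw [kloostermanZMod, ← Equiv.sum_comp (Equiv.mulLeft a)]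
  refine Fintype.sum_congr _ _ fun x => ?_
  simp only [Equiv.coe_mulLeft, mul_inv_rev, Units.val_mul]
  congr 1
  linear_combination m * ↑x⁻¹ * a.mul_inv

lemma kloostermanZMod_zero_left (n : ZMod c) : kloostermanZMod c 0 n = ramanujanSum c n := by
  simp [kloostermanZMod, ramanujanSum]

lemma ramanujanSum_of_isUnit {b : ZMod c} (hb : IsUnit b) : ramanujanSum c b = ramanujanSum c 1 := by
  obtain ⟨b, rfl⟩ := hb
  rw [ramanujanSum, ← Equiv.sum_comp (Equiv.mulLeft b⁻¹)]
  simp [ramanujanSum]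

end

lemma ramanujanSum_one_of_prime (p : ℕ) [Fact p.Prime] : ramanujanSum p 1 = -1 := by
  have hψ : ZMod.stdAddChar (N := p) ≠ 1 := AddChar.ne_one_iff.mpr ⟨1, fun h =>
    one_ne_zero (ZMod.injective_stdAddChar (h.trans (AddChar.map_zero_eq_one _).symm))⟩
  have hsum : ∑ a : ZMod p, ZMod.stdAddChar a = 0 := AddChar.sum_eq_zero_of_ne_one hψ
  rw [Fintype.sum_eq_add_sum_compl 0, AddChar.map_zero_eq_one] at hsum
  have hunits : ramanujanSum p 1 = ∑ a ∈ {0}ᶜ, ZMod.stdAddChar (a : ZMod p) := by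
    rw [ramanujanSum, ← Equiv.sum_comp unitsEquivNeZero.symm]
    simp only [one_mul]
    exact (Finset.sum_subtype _ (by simp) _).symm
  linear_combination hunits + hsum

lemma ZMod.stdAddChar_intCast_eq_mul_of_bezout {c d : ℕ} [NeZero c] [NeZero d] {s t : ℤ}
    (hst : s * c + t * d = 1) (k : ℤ) :
    stdAddChar (k : ZMod (c * d)) =
      stdAddChar ((t * k : ℤ) : ZMod c) * stdAddChar ((s * k : ℤ) : ZMod d) := by
  rw [stdAddChar_coe, stdAddChar_coe, stdAddChar_coe, ← Complex.exp_add]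
  congr 1
  have hc : (c : ℂ) ≠ 0 := Nat.cast_ne_zero.mpr (NeZero.ne c)
  have hd : (d : ℂ) ≠ 0 := Nat.cast_ne_zero.mpr (NeZero.ne d)
  have hst' : (s : ℂ) * c + t * d = 1 := by exact_mod_cast hst
  push_cast
  field_simp
  linear_combination (-(k : ℂ)) * hst'

def ZMod.unitsChineseRemainder {c d : ℕ} (h : c.Coprime d) :
    (ZMod (c * d))ˣ ≃* (ZMod c)ˣ × (ZMod d)ˣ :=
  (Units.mapEquiv (chineseRemainder h).toMulEquiv).trans MulEquiv.prodUnits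

lemma ZMod.unitsChineseRemainder_fst {c d : ℕ} (h : c.Coprime d) (x : (ZMod (c * d))ˣ) :
    ((unitsChineseRemainder h x).1 : ZMod c) = cast (x : ZMod (c * d)) := by
  simp [unitsChineseRemainder, chineseRemainder, MulEquiv.prodUnits]

lemma ZMod.unitsChineseRemainder_snd {c d : ℕ} (h : c.Coprime d) (x : (ZMod (c * d))ˣ) :
    ((unitsChineseRemainder h x).2 : ZMod d) = cast (x : ZMod (c * d)) := by
  simp [unitsChineseRemainder, chineseRemainder, MulEquiv.prodUnits]

lemma kloostermanZMod_mul {c d : ℕ} [NeZero c] [NeZero d] {u : ZMod c} {v : ZMod d}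
    (hu : u * d = 1) (hv : v * c = 1) (m n : ℤ) :
    kloostermanZMod (c * d) m n =
      kloostermanZMod c (u * m) (u * n) * kloostermanZMod d (v * m) (v * n) := by
  have h : c.Coprime d := ((ZMod.isUnit_iff_coprime d c).mp (.of_mul_eq_one_right u hu)).symm
  obtain ⟨s, t, hst⟩ := Nat.isCoprime_iff_coprime.mpr h
  obtain rfl : (t : ZMod c) = u := left_inv_eq_right_inv
    (by simpa using congrArg (Int.cast : ℤ → ZMod c) hst) (by rw [mul_comm, hu])
  obtain rfl : (s : ZMod d) = v := left_inv_eq_right_inv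
    (by simpa using congrArg (Int.cast : ℤ → ZMod d) hst) (by rw [mul_comm, hv])
  rw [kloostermanZMod, kloostermanZMod, kloostermanZMod, Fintype.sum_mul_sum,
    ← Fintype.sum_prod_type', ← Fintype.sum_equiv (ZMod.unitsChineseRemainder h).toEquiv]
  intro x
  rw [← ZMod.intCast_zmod_cast (_ + _), ZMod.stdAddChar_intCast_eq_mul_of_bezout hst]
  simp only [MulEquiv.toEquiv_eq_coe, MulEquiv.coe_toEquiv, ← Prod.fst_inv, ← Prod.snd_inv,
    ← map_inv, ZMod.unitsChineseRemainder_fst, ZMod.unitsChineseRemainder_snd]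
  push_cast [ZMod.intCast_cast, ZMod.cast_add (dvd_mul_right c d), ZMod.cast_mul (dvd_mul_right c d),
    ZMod.cast_add (dvd_mul_left d c), ZMod.cast_mul (dvd_mul_left d c),
    ZMod.cast_intCast (dvd_mul_right c d), ZMod.cast_intCast (dvd_mul_left d c)]
  ring_nf

lemma ramanujanSum_one_mul {c d : ℕ} [NeZero c] [NeZero d] (h : c.Coprime d) :
    ramanujanSum (c * d) 1 = ramanujanSum c 1 * ramanujanSum d 1 := by
  have hu : (d : ZMod c)⁻¹ * d = 1 := by rw [mul_comm, ZMod.coe_mul_inv_eq_one d h.symm]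
  have hv : (c : ZMod d)⁻¹ * c = 1 := by rw [mul_comm, ZMod.coe_mul_inv_eq_one c h]
  have hmul := kloostermanZMod_mul hu hv 0 1
  simp only [Int.cast_zero, Int.cast_one, mul_zero, mul_one, kloostermanZMod_zero_left] at hmul
  rw [hmul, ramanujanSum_of_isUnit (.of_mul_eq_one _ hu), ramanujanSum_of_isUnit (.of_mul_eq_one _ hv)]

open ArithmeticFunction ArithmeticFunction.Moebius in
lemma ramanujanSum_one_of_squarefree {q : ℕ} [NeZero q] (hq : Squarefree q) :
    ramanujanSum q 1 = μ q := by
  revert hq ‹NeZero q›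
  induction q using Nat.recOnPosPrimePosCoprime with
  | zero => intro _ h; exact absurd h not_squarefree_zero
  | one => intro _ _; simp [ramanujanSum, Subsingleton.elim _ (0 : ZMod 1)]
  | prime_pow p k hp hk =>
    intro _ hq
    obtain ⟨-, rfl⟩ := (Nat.squarefree_pow_iff hp.ne_one hk.ne').mp hq
    have : Fact (p ^ 1).Prime := ⟨by rwa [pow_one]⟩
    rw [ramanujanSum_one_of_prime, pow_one, moebius_apply_prime hp, Int.cast_neg, Int.cast_one]
  | coprime a b ha hb hab iha ihb =>
    intro _ hq
    have : NeZero a := ⟨by omega⟩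
    have : NeZero b := ⟨by omega⟩
    rw [ramanujanSum_one_mul hab, iha (Squarefree.of_mul_left hq), ihb (Squarefree.of_mul_right hq),
      isMultiplicative_moebius.map_mul_of_coprime hab, Int.cast_mul]

open ArithmeticFunction.Moebius in
lemma kloostermanZMod_zero_left_of_squarefree {q : ℕ} [NeZero q] (hq : Squarefree q) {n : ZMod q}
    (hn : IsUnit n) : kloostermanZMod q 0 n = μ q := by
  rw [kloostermanZMod_zero_left, ramanujanSum_of_isUnit hn, ramanujanSum_one_of_squarefree hq]

open ArithmeticFunction ArithmeticFunction.Moebius in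
theorem kloosterman_mul_level_squarefree_general (D c : ℕ) [NeZero D] [NeZero c]
    (hsq : Squarefree D) (hcop : Nat.Coprime c D)
    (ℓ ℓ₀ ℓ' n : ℕ) (hfac : ℓ = ℓ₀ * ℓ')
    (hℓ₀ : ∀ p : ℕ, p.Prime → p ∣ ℓ₀ → p ∣ D) (hℓ' : Nat.Coprime ℓ' D)
    (Dbar : ℤ) (hDbar : (D : ℤ) * Dbar ≡ 1 [ZMOD (c : ℤ)]) :
    kloosterman (c * D) ((ℓ₀ : ℤ) * D * n) (ℓ' : ℤ)
        = kloosterman c (n : ℤ) ((ℓ : ℤ) * Dbar) * ((μ D : ℤ) : ℂ)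
      ∧ kloosterman c (n : ℤ) ((ℓ : ℤ) * Dbar)
        = ((μ D : ℤ) : ℂ) * kloosterman (c * D) ((ℓ₀ : ℤ) * D * n) (ℓ' : ℤ) := by
  have hu : (Dbar : ZMod c) * D = 1 := by
    rw [mul_comm]; simpa using (ZMod.intCast_eq_intCast_iff _ _ _).mpr hDbar
  have hv : (c : ZMod D)⁻¹ * c = 1 := by rw [mul_comm, ZMod.coe_mul_inv_eq_one c hcop]
  have hℓ₀c : ℓ₀.Coprime c := Nat.coprime_of_dvd fun p hp hpℓ₀ hpc =>
    hp.ne_one (Nat.eq_one_of_dvd_coprimes hcop hpc (hℓ₀ p hp hpℓ₀))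
  have hfactor_c : kloostermanZMod c (Dbar * (ℓ₀ * D * n : ℤ)) (Dbar * (ℓ' : ℤ)) =
      kloosterman c n (ℓ * Dbar) := by
    calc _ = kloostermanZMod c (ℓ₀ * n) (Dbar * ℓ') := by
          push_cast; congr 1; linear_combination (ℓ₀ * n : ZMod c) * hu
      _ = kloostermanZMod c n (ℓ₀ * (Dbar * ℓ')) :=
          kloostermanZMod_mul_left_of_isUnit ((ZMod.isUnit_iff_coprime ℓ₀ c).mpr hℓ₀c) _ _
      _ = _ := by rw [kloosterman_eq_kloostermanZMod, hfac]; push_cast; congr 1; ring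
  have hfactor_D : kloostermanZMod D ((c : ZMod D)⁻¹ * (ℓ₀ * D * n : ℤ)) ((c : ZMod D)⁻¹ * (ℓ' : ℤ)) =
      μ D := by
    rw [show ((ℓ₀ * D * n : ℤ) : ZMod D) = 0 by simp, mul_zero,
      kloostermanZMod_zero_left_of_squarefree hsq]
    simpa using (IsUnit.of_mul_eq_one _ hv).mul ((ZMod.isUnit_iff_coprime ℓ' D).mpr hℓ')
  have hfirst : kloosterman (c * D) ((ℓ₀ : ℤ) * D * n) ℓ' = kloosterman c n (ℓ * Dbar) * μ D := by
    rw [kloosterman_eq_kloostermanZMod, kloostermanZMod_mul hu hv, hfactor_c, hfactor_D]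
  have hμ : ((μ D : ℤ) : ℂ) ^ 2 = 1 := by exact_mod_cast moebius_sq_eq_one_of_squarefree hsq
  refine ⟨hfirst, ?_⟩
  rw [hfirst]
  linear_combination (-kloosterman c n (ℓ * Dbar)) * hμ

open ArithmeticFunction ArithmeticFunction.Moebius in
/-- For square-free `D > 1`, `(c,D)=1`, and `ℓ = ℓ₀ℓ'` as above, the untwisted
Kloosterman sums satisfy `S(ℓ₀Dn, ℓ'; cD) = S(n, ℓD̄; c)·μ(D)`, and equivalently
`S(n, ℓD̄; c) = μ(D)·S(ℓ₀Dn, ℓ'; cD)`. -/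
theorem kloosterman_mul_level_squarefree (D c : ℕ) [NeZero D] [NeZero c] (hD : 1 < D)
    (hsq : Squarefree D) (hc : 1 ≤ c) (hcop : Nat.Coprime c D)
    (ℓ ℓ₀ ℓ' n : ℕ) (hℓpos : 1 ≤ ℓ) (hn : 1 ≤ n) (hfac : ℓ = ℓ₀ * ℓ')
    (hℓ₀ : ∀ p : ℕ, p.Prime → p ∣ ℓ₀ → p ∣ D) (hℓ' : Nat.Coprime ℓ' D)
    (Dbar : ℤ) (hDbar : (D : ℤ) * Dbar ≡ 1 [ZMOD (c : ℤ)]) :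
    kloosterman (c * D) ((ℓ₀ : ℤ) * D * n) (ℓ' : ℤ)
        = kloosterman c (n : ℤ) ((ℓ : ℤ) * Dbar) * ((μ D : ℤ) : ℂ)
      ∧ kloosterman c (n : ℤ) ((ℓ : ℤ) * Dbar)
        = ((μ D : ℤ) : ℂ) * kloosterman (c * D) ((ℓ₀ : ℤ) * D * n) (ℓ' : ℤ) :=
  kloosterman_mul_level_squarefree_general D c hsq hcop ℓ ℓ₀ ℓ' n hfac hℓ₀ hℓ' Dbar hDbar
end
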